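/- The Zeeman Z topology on Minkowski space ℝ⁴ is coarser than Zeeman's Fine topology F: every Z-open set is F-open. -/

import Mathlib

open Topology Set

/-- Minkowski space: `ℝ⁴` with the Euclidean metric structure. -/
abbrev M : Type := EuclideanSpace ℝ (Fin 4)

/-- The characteristic quadratic form `Q(x) = x₀² − x₁² − x₂² − x₃²`. -/
noncomputable def Q (x : M) : ℝ := x 0 ^ 2 - x 1 ^ 2 - x 2 ^ 2 - x 3 ^ 2

/-- The Euclidean topology `E` on `M`. -/
noncomputable def E : TopologicalSpace M := inferInstance

/-- The light cone of `x`. -/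
def lightCone (x : M) : Set M := {y | Q (y - x) = 0}

/-- The time cone of `x`. -/
def timeCone (x : M) : Set M := {x} ∪ {y | Q (y - x) > 0}

/-- The space cone of `x`. -/
def spaceCone (x : M) : Set M := {x} ∪ {y | Q (y - x) < 0}

/-- The basic open sets `Z_ε(x) = B_ε^E(x) ∩ (C^T(x) ∪ C^S(x))` of the Zeeman `Z` topology. -/
def Zset (x : M) (ε : ℝ) : Set M := Metric.ball x ε ∩ (timeCone x ∪ spaceCone x)

/-- The Zeeman `Z` topology, generated by the base of the sets `Z_ε(x)`. -/
def ZeemanZ : TopologicalSpace M :=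
  TopologicalSpace.generateFrom {s | ∃ x : M, ∃ ε : ℝ, 0 < ε ∧ s = Zset x ε}

/-- The irreflexive horismos relation `x → y`. -/
def horismos (x y : M) : Prop := y ≠ x ∧ Q (y - x) = 0 ∧ (y - x) 0 > 0

/-- The future null cone `N⁺(x)`. -/
def Nplus (x : M) : Set M := {y | horismos x y}

/-- The past null cone `N⁻(x)`. -/
def Nminus (x : M) : Set M := {y | horismos y x}

/-- The interval topology `T_in^→` induced by the irreflexive horismos relation,
generated by the subbase of complements of future and past null cones. -/
def Tin : TopologicalSpace M :=
  TopologicalSpace.generateFrom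
    ({s | ∃ x : M, s = univ \ Nplus x} ∪ {s | ∃ x : M, s = univ \ Nminus x})

/-- A time axis: an affine line with timelike direction. -/
def IsTimeAxis (L : Set M) : Prop :=
  ∃ a v : M, Q v > 0 ∧ L = {p | ∃ t : ℝ, p = a + t • v}

/-- A space axis: an affine 3-flat whose direction is a 3-dimensional subspace
on which `Q` is negative definite. -/
def IsSpaceAxis (L : Set M) : Prop :=
  ∃ a : M, ∃ W : Submodule ℝ M, Module.finrank ℝ W = 3 ∧
    (∀ w ∈ W, w ≠ 0 → Q w < 0) ∧ L = {p | ∃ w ∈ W, p = a + w}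

/-- A topology `t` on `M` induces the Euclidean subspace topology on every time axis
and on every space axis. -/
def InducesEuclideanOnAxes (t : TopologicalSpace M) : Prop :=
  (∀ L : Set M, IsTimeAxis L →
    TopologicalSpace.induced (Subtype.val : L → M) t =
      TopologicalSpace.induced (Subtype.val : L → M) E) ∧
  (∀ L : Set M, IsSpaceAxis L →
    TopologicalSpace.induced (Subtype.val : L → M) t =
      TopologicalSpace.induced (Subtype.val : L → M) E)

/-- Zeeman's Fine topology `F`: the finest topology on `M` inducing the Euclidean topology
on every time and space axis.  (In Mathlib's lattice of topologies, `≤` means "finer",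
so the finest such topology is the infimum of the family.) -/
noncomputable def FineF : TopologicalSpace M :=
  sInf {t : TopologicalSpace M | InducesEuclideanOnAxes t}

/-- The chronological order `x ≪ y`. -/
def chron (x y : M) : Prop := Q (y - x) > 0 ∧ (y - x) 0 > 0

/-! A basic set `Z_ε(x)` is the Euclidean ball `B_ε(x)` with the light cone of `x` removed, `x`
itself kept. Distinct points of a time axis, or of a space axis, are never lightlike separated.
So on an axis `L` the trace of `Z_ε(x)` is `B_ε(x) ∩ L` if `x ∈ L`, and otherwise the trace of the
Euclidean open set `B_ε(x) \ lightCone x`. Hence `Z` induces the Euclidean topology on every axis,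
and the finest topology with this property is finer than `Z`. -/

@[fun_prop]
lemma continuous_Q : Continuous Q := by
  unfold Q
  fun_prop

lemma Q_smul (c : ℝ) (v : M) : Q (c • v) = c ^ 2 * Q v := by
  simp only [Q, PiLp.smul_apply, smul_eq_mul]
  ring

lemma timeCone_union_spaceCone (x : M) :
    timeCone x ∪ spaceCone x = insert x {y | Q (y - x) ≠ 0} := by
  ext y
  simp only [timeCone, spaceCone, ne_iff_lt_or_gt]
  grind

lemma zeemanZ_le_E : ZeemanZ ≤ E := by
  refine TopologicalSpace.le_def.mpr fun U (hU : IsOpen U) => ?_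
  refine @isOpen_iff_forall_mem_open _ ZeemanZ _ |>.mpr fun x hx => ?_
  obtain ⟨ε, hε, hball⟩ := Metric.isOpen_iff.mp hU x hx
  exact ⟨Zset x ε, inter_subset_left.trans hball,
    TopologicalSpace.isOpen_generateFrom_of_mem ⟨x, ε, hε, rfl⟩,
    Metric.mem_ball_self hε, Or.inl (Or.inl rfl)⟩

section NonLightlike

variable {L : Set M} (hL : L.Pairwise fun x y => Q (y - x) ≠ 0)
include hL

lemma exists_isOpen_inter_eq_inter_Zset (x : M) (ε : ℝ) :
    ∃ U : Set M, IsOpen U ∧ L ∩ U = L ∩ Zset x ε := by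
  rw [Zset, timeCone_union_spaceCone]
  by_cases hx : x ∈ L
  · refine ⟨Metric.ball x ε, Metric.isOpen_ball, ?_⟩
    ext y
    simp only [mem_inter_iff, mem_insert_iff, mem_ofPred_eq]
    constructor
    · rintro ⟨hy, hball⟩
      exact ⟨hy, hball, (eq_or_ne y x).imp_right fun hne => hL hx hy hne.symm⟩
    · exact fun ⟨hy, hball, _⟩ => ⟨hy, hball⟩
  · refine ⟨Metric.ball x ε ∩ {y | Q (y - x) ≠ 0},
      Metric.isOpen_ball.inter (isOpen_ne.preimage (by fun_prop)), ?_⟩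
    ext y
    simp only [mem_inter_iff, mem_insert_iff, mem_ofPred_eq]
    constructor
    · exact fun ⟨hy, hball, hQ⟩ => ⟨hy, hball, Or.inr hQ⟩
    · rintro ⟨hy, hball, rfl | hQ⟩
      · exact absurd hy hx
      · exact ⟨hy, hball, hQ⟩

lemma induced_zeemanZ_eq_induced_E :
    TopologicalSpace.induced (Subtype.val : L → M) ZeemanZ =
      TopologicalSpace.induced (Subtype.val : L → M) E := by
  refine le_antisymm (induced_mono zeemanZ_le_E) ?_
  rw [ZeemanZ, induced_generateFrom_eq]
  refine le_generateFrom ?_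
  rintro _ ⟨_, ⟨x, ε, -, rfl⟩, rfl⟩
  obtain ⟨U, hU, hUL⟩ := exists_isOpen_inter_eq_inter_Zset hL x ε
  exact isOpen_induced_iff.mpr ⟨U, hU, Subtype.preimage_coe_eq_preimage_coe_iff.mpr hUL⟩

end NonLightlike

lemma IsTimeAxis.pairwise_Q_ne_zero {L : Set M} (hL : IsTimeAxis L) :
    L.Pairwise fun x y => Q (y - x) ≠ 0 := by
  obtain ⟨a, v, hv, rfl⟩ := hL
  rintro _ ⟨s, rfl⟩ _ ⟨t, rfl⟩ hne
  have hts : t - s ≠ 0 := sub_ne_zero.mpr fun h => hne (by rw [h])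
  rw [add_sub_add_left_eq_sub, ← sub_smul, Q_smul]
  exact (mul_pos (pow_two_pos_of_ne_zero hts) hv).ne'

lemma IsSpaceAxis.pairwise_Q_ne_zero {L : Set M} (hL : IsSpaceAxis L) :
    L.Pairwise fun x y => Q (y - x) ≠ 0 := by
  obtain ⟨a, W, -, hneg, rfl⟩ := hL
  rintro _ ⟨v, hv, rfl⟩ _ ⟨w, hw, rfl⟩ hne
  rw [add_sub_add_left_eq_sub]
  exact (hneg _ (W.sub_mem hw hv) (sub_ne_zero.mpr fun h => hne (by rw [h]))).ne

lemma inducesEuclideanOnAxes_zeemanZ : InducesEuclideanOnAxes ZeemanZ :=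
  ⟨fun _ hL => induced_zeemanZ_eq_induced_E hL.pairwise_Q_ne_zero,
    fun _ hL => induced_zeemanZ_eq_induced_E hL.pairwise_Q_ne_zero⟩

/-- The Zeeman `Z` topology is coarser than Zeeman's Fine topology `F`:
every `Z`-open set is `F`-open. -/
theorem zeemanZ_coarser_than_fineF :
    ∀ s : Set M, IsOpen[ZeemanZ] s → IsOpen[FineF] s :=
  TopologicalSpace.le_def.mp (sInf_le inducesEuclideanOnAxes_zeemanZ)
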